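/- arXiv:2504.18522 — 3 statements merged into one kernel-verified Lean document; each statement's English description precedes it below -/
import Mathlib

section
/- Let (f, W, P) and (f̃, W̃, P̃) be two models satisfying all the assumptions of the identifiability theorem: for all e ∈ {0, ..., M}, f(Z + W a_e) is equal in distribution to f̃(Z̃ + W̃ a_e) with Z ~ P, Z̃ ~ P̃ independent; f and f̃ are C²-diffeomorphisms onto their images; P = N(−W a_0, I) and P̃ = N(−W̃ a_0, I); and rank(W̃ A) = d_Z or rank(W A) = d_Z. If in addition A has full row rank, i.e., rank(A) = K ≤ M, then there exists an orthogonal matrix O ∈ O(d_Z) such that W̃ = O W. -/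
/-!
Write `N(m)` for `N(m, I)`. Shifting the latent variable turns the hypothesis into
`f_* N(U j) = f̃_* N(V j)` for the columns `U j`, `V j` of `W A` and `W̃ A`, together with
`f_* N(0) = f̃_* N(0)`. Since `N(m)` has density `exp (⟪z, m⟫ - ‖m‖² / 2)` with respect to `N(0)`
and `f`, `f̃` are injective, comparing densities shows that `h = f̃⁻¹ ∘ f` satisfies
`⟪h z, V j⟫ - ‖V j‖² / 2 = ⟪z, U j⟫ - ‖U j‖² / 2` almost everywhere; as `V` has full row rank,
`h` is a.e. an affine map `z ↦ T z + c`. This map pushes `N(0)` to `N(0)` and `N(U j)` to `N(V j)`,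
and comparing moment generating functions gives `T Tᵀ = 1` and `V j = T (U j)`, i.e.
`W̃ A = T W A`. Finally `A` has a right inverse.
-/

open MeasureTheory ProbabilityTheory

/-- The multivariate Gaussian distribution `N(m, I)` on `ℝ^d` with mean `m` and
identity covariance, realized as the shift by `m` of a product of standard Gaussians. -/
noncomputable def gaussianId (d : ℕ) (m : Fin d → ℝ) :
    MeasureTheory.Measure (Fin d → ℝ) :=
  (MeasureTheory.Measure.pi fun _ : Fin d => ProbabilityTheory.gaussianReal 0 1).map
    (fun z => m + z)

/-- `f : ℝ^n → ℝ^D` is a `C²`-diffeomorphism onto its image: it is `C²`, injective,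
and has a `C²` inverse on its range. -/
def IsC2DiffeoOntoImage {n m : ℕ} (f : (Fin n → ℝ) → (Fin m → ℝ)) : Prop :=
  ContDiff ℝ 2 f ∧ Function.Injective f ∧
    ∃ g : (Fin m → ℝ) → (Fin n → ℝ), (∀ z, g (f z) = z) ∧
      ContDiffOn ℝ 2 g (Set.range f)

open Matrix

namespace MeasureTheory

theorem lintegral_fin_prod_eq_prod {α : Type*} [MeasurableSpace α] {n : ℕ}
    (μ : Fin n → Measure α) [∀ i, SigmaFinite (μ i)] {f : Fin n → α → ENNReal}
    (hf : ∀ i, Measurable (f i)) :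
    ∫⁻ x, ∏ i, f i (x i) ∂Measure.pi μ = ∏ i, ∫⁻ y, f i y ∂μ i := by
  induction n with
  | zero => simp
  | succ n ih =>
    have hprod : Measurable fun x : Fin n → α => ∏ j, f j.succ (x j) :=
      Finset.measurable_prod _ fun j _ => (hf j.succ).comp (measurable_pi_apply j)
    rw [← (measurePreserving_piFinSuccAbove μ 0).symm.lintegral_comp (by fun_prop),
      Fin.prod_univ_succ, ← ih (fun j => μ j.succ) (fun j => hf j.succ),
      ← lintegral_prod_mul (hf 0).aemeasurable hprod.aemeasurable]
    simp [Fin.prod_univ_succ, MeasurableEquiv.piFinSuccAbove_symm_apply]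

theorem Measure.pi_withDensity {α : Type*} [MeasurableSpace α] {n : ℕ}
    (μ : Fin n → Measure α) [∀ i, SigmaFinite (μ i)] {f : Fin n → α → ENNReal}
    (hf : ∀ i, Measurable (f i)) [∀ i, SigmaFinite ((μ i).withDensity (f i))] :
    Measure.pi (fun i => (μ i).withDensity (f i))
      = (Measure.pi μ).withDensity fun x => ∏ i, f i (x i) := by
  refine Measure.pi_eq (μ := fun i => (μ i).withDensity (f i)) fun s hs => ?_
  rw [withDensity_apply _ (MeasurableSet.univ_pi hs), ← lintegral_indicator (.univ_pi hs)]
  have hind : (Set.univ.pi s).indicator (fun x => ∏ i, f i (x i))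
      = fun x => ∏ i, (s i).indicator (f i) (x i) := by
    ext x
    by_cases h : ∀ i, x i ∈ s i
    · rw [Set.indicator_of_mem (Set.mem_univ_pi.mpr h)]
      exact Finset.prod_congr rfl fun i _ => (Set.indicator_of_mem (h i) _).symm
    · rw [Set.indicator_of_notMem (mt Set.mem_univ_pi.mp h)]
      obtain ⟨i, hi⟩ := not_forall.mp h
      exact (Finset.prod_eq_zero (Finset.mem_univ i) (Set.indicator_of_notMem hi _)).symm
  rw [hind, lintegral_fin_prod_eq_prod μ fun i => (hf i).indicator (hs i)]
  exact Finset.prod_congr rfl fun i _ => by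
    rw [lintegral_indicator (hs i), withDensity_apply _ (hs i)]

section LeftInverse

variable {α β : Type*} [MeasurableSpace α] [MeasurableSpace β] {f : α → β} {g : β → α}

theorem Measure.map_withDensity_of_leftInverse (μ : Measure α) (hf : Measurable f)
    (hg : Measurable g) (hgf : Function.LeftInverse g f) {ρ : α → ENNReal} (hρ : Measurable ρ) :
    (μ.withDensity ρ).map f = (μ.map f).withDensity (ρ ∘ g) := by
  ext s hs
  rw [Measure.map_apply hf hs, withDensity_apply _ hs, withDensity_apply _ (hf hs),
    setLIntegral_map hs (hρ.comp hg) hf]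
  simp only [Function.comp_apply, hgf _]

theorem Measure.map_comp_eq_of_map_eq_map {γ : Type*} [MeasurableSpace γ] {μ : Measure γ}
    {ν : Measure α} {φ : γ → β} (hφ : Measurable φ) (hf : Measurable f) (hg : Measurable g)
    (hgf : Function.LeftInverse g f) (h : μ.map φ = ν.map f) : μ.map (g ∘ φ) = ν := by
  rw [← Measure.map_map hg hφ, h, Measure.map_map hg hf, hgf.comp_eq_id, Measure.map_id]

end LeftInverse

end MeasureTheory

theorem MeasurableEmbedding.exists_measurable_leftInverse {α β : Type*} [MeasurableSpace α]
    [MeasurableSpace β] [Nonempty α] {f : α → β} (hf : MeasurableEmbedding f) :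
    ∃ g : β → α, Measurable g ∧ Function.LeftInverse g f := by
  obtain ⟨g, hg, hgf⟩ := hf.exists_measurable_extend measurable_id fun _ => ‹Nonempty α›
  exact ⟨g, hg, congrFun hgf⟩

theorem Matrix.exists_mul_eq_one_of_rank_eq {K m n : Type*} [Field K] [Fintype m]
    [DecidableEq m] [Fintype n] (A : Matrix m n K) (h : A.rank = Fintype.card m) :
    ∃ B : Matrix n m K, A * B = 1 := by
  have hrange : LinearMap.range A.mulVecLin = ⊤ :=
    Submodule.eq_top_of_finrank_eq (by rw [← Matrix.rank, h, Module.finrank_fintype_fun_eq_card])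
  exact mulVec_surjective_iff_exists_right_inverse.mp (LinearMap.range_eq_top.mp hrange)

theorem Matrix.mul_transpose_eq_one_of_forall_dotProduct_self {R n : Type*} [CommRing R]
    [IsDomain R] [CharZero R] [Fintype n] [DecidableEq n] {T : Matrix n n R}
    (h : ∀ t, Tᵀ *ᵥ t ⬝ᵥ Tᵀ *ᵥ t = t ⬝ᵥ t) : T * Tᵀ = 1 := by
  have hpolar (s t : n → R) : Tᵀ *ᵥ s ⬝ᵥ Tᵀ *ᵥ t = s ⬝ᵥ t := by
    have hst := h (s + t)
    simp only [mulVec_add, add_dotProduct, dotProduct_add, h s, h t,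
      dotProduct_comm (Tᵀ *ᵥ t), dotProduct_comm t] at hst
    exact mul_left_cancel₀ (two_ne_zero (α := R)) (by linear_combination hst)
  refine ext_of_mulVec_single fun j => dotProduct_eq _ _ fun s => ?_
  rw [dotProduct_comm, ← mulVec_mulVec, dotProduct_mulVec, ← mulVec_transpose, hpolar,
    one_mulVec, dotProduct_comm]

theorem gaussianReal_eq_withDensity (t : ℝ) :
    gaussianReal t 1 = (gaussianReal 0 1).withDensity
      fun x => ENNReal.ofReal (Real.exp (x * t - t ^ 2 / 2)) := by
  rw [gaussianReal_of_var_ne_zero _ one_ne_zero, gaussianReal_of_var_ne_zero _ one_ne_zero,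
    ← withDensity_mul _ (measurable_gaussianPDF 0 1) (by fun_prop)]
  congr 1 with x
  simp only [gaussianPDF_def, Pi.mul_apply]
  rw [← ENNReal.ofReal_mul (gaussianPDFReal_nonneg _ _ _),
    gaussianPDFReal, gaussianPDFReal, mul_assoc (√_)⁻¹, ← Real.exp_add]
  congr 3
  push_cast
  ring

theorem gaussianId_eq_pi (d : ℕ) (m : Fin d → ℝ) :
    gaussianId d m = Measure.pi fun i => gaussianReal (m i) 1 := by
  rw [gaussianId, show (fun z => m + z) = fun z i => m i + z i from rfl,
    Measure.pi_map_pi fun _ => by fun_prop]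
  simp_rw [gaussianReal_map_const_add, zero_add]

theorem gaussianId_map_add_const (d : ℕ) (m v : Fin d → ℝ) :
    (gaussianId d m).map (· + v) = gaussianId d (m + v) := by
  rw [gaussianId, gaussianId, Measure.map_map (by fun_prop) (by fun_prop)]
  congr 1
  ext1 z
  exact add_right_comm m z v

theorem map_gaussianId_comp_add_const {d : ℕ} {Y : Type*} [MeasurableSpace Y]
    {φ : (Fin d → ℝ) → Y} (hφ : Measurable φ) (m w : Fin d → ℝ) :
    (gaussianId d m).map (fun z => φ (z + w)) = (gaussianId d (m + w)).map φ := by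
  rw [← gaussianId_map_add_const, Measure.map_map hφ (by fun_prop)]
  rfl

instance (d : ℕ) (m : Fin d → ℝ) : IsProbabilityMeasure (gaussianId d m) := by
  rw [gaussianId_eq_pi]; infer_instance

theorem gaussianId_eq_withDensity (d : ℕ) (m : Fin d → ℝ) :
    gaussianId d m = (gaussianId d 0).withDensity
      fun z => ENNReal.ofReal (Real.exp (z ⬝ᵥ m - m ⬝ᵥ m / 2)) := by
  have hprod : ∀ z : Fin d → ℝ, ENNReal.ofReal (Real.exp (z ⬝ᵥ m - m ⬝ᵥ m / 2))
      = ∏ i, ENNReal.ofReal (Real.exp (z i * m i - m i ^ 2 / 2)) := by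
    intro z
    rw [← ENNReal.ofReal_prod_of_nonneg fun i _ => (Real.exp_pos _).le, ← Real.exp_sum,
      Finset.sum_sub_distrib, ← Finset.sum_div]
    simp only [dotProduct, sq]
  have hcoord : (fun i => gaussianReal (m i) 1) = fun i => (gaussianReal 0 1).withDensity
      fun x => ENNReal.ofReal (Real.exp (x * m i - m i ^ 2 / 2)) :=
    funext fun i => gaussianReal_eq_withDensity (m i)
  simp_rw [hprod, gaussianId_eq_pi, Pi.zero_apply, hcoord]
  have : ∀ i, IsProbabilityMeasure ((gaussianReal 0 1).withDensity
      fun x => ENNReal.ofReal (Real.exp (x * m i - m i ^ 2 / 2))) := fun i => by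
    rw [← gaussianReal_eq_withDensity]; infer_instance
  exact Measure.pi_withDensity _ fun i => by fun_prop

theorem integral_exp_dotProduct_gaussianId (d : ℕ) (m t : Fin d → ℝ) :
    ∫ z, Real.exp (t ⬝ᵥ z) ∂gaussianId d m = Real.exp (t ⬝ᵥ m + t ⬝ᵥ t / 2) := by
  have hmgf (i : Fin d) : ∫ x, Real.exp (t i * x) ∂gaussianReal (m i) 1
      = Real.exp (m i * t i + t i ^ 2 / 2) := by
    simpa [mgf] using congrFun (mgf_id_gaussianReal (μ := m i) (v := 1)) (t i)
  simp_rw [gaussianId_eq_pi, dotProduct, Real.exp_sum]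
  rw [integral_fintype_prod_eq_prod (fun i x => Real.exp (t i * x))]
  simp_rw [hmgf, ← Real.exp_sum, Finset.sum_add_distrib, ← Finset.sum_div, sq, mul_comm (m _)]

section GaussianMeans

variable {d : ℕ}

theorem dotProduct_eq_of_map_affine_gaussianId {T : Matrix (Fin d) (Fin d) ℝ} {c u v : Fin d → ℝ}
    (h : (gaussianId d u).map (fun z => T *ᵥ z + c) = gaussianId d v) (t : Fin d → ℝ) :
    t ⬝ᵥ c + Tᵀ *ᵥ t ⬝ᵥ u + Tᵀ *ᵥ t ⬝ᵥ Tᵀ *ᵥ t / 2 = t ⬝ᵥ v + t ⬝ᵥ t / 2 := by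
  have hexp := integral_exp_dotProduct_gaussianId d v t
  rw [← h, integral_map (by fun_prop) (by fun_prop)] at hexp
  simp_rw [dotProduct_add, Real.exp_add, integral_mul_const, dotProduct_mulVec,
    ← mulVec_transpose] at hexp
  rw [integral_exp_dotProduct_gaussianId, ← Real.exp_add, ← Real.exp_add, Real.exp_eq_exp] at hexp
  linarith

theorem mul_transpose_eq_one_of_map_affine_gaussianId {T : Matrix (Fin d) (Fin d) ℝ}
    {c : Fin d → ℝ} (h : (gaussianId d 0).map (fun z => T *ᵥ z + c) = gaussianId d 0) :
    T * Tᵀ = 1 := by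
  refine mul_transpose_eq_one_of_forall_dotProduct_self fun t => ?_
  have hpos := dotProduct_eq_of_map_affine_gaussianId h t
  have hneg := dotProduct_eq_of_map_affine_gaussianId h (-t)
  simp only [mulVec_neg, neg_dotProduct, dotProduct_neg, neg_neg, dotProduct_zero] at hpos hneg
  linarith

theorem eq_mulVec_of_map_affine_gaussianId {T : Matrix (Fin d) (Fin d) ℝ} {c u v : Fin d → ℝ}
    (h0 : (gaussianId d 0).map (fun z => T *ᵥ z + c) = gaussianId d 0)
    (h : (gaussianId d u).map (fun z => T *ᵥ z + c) = gaussianId d v) :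
    v = T *ᵥ u := by
  refine dotProduct_eq _ _ fun t => ?_
  have h0t := dotProduct_eq_of_map_affine_gaussianId h0 t
  have ht := dotProduct_eq_of_map_affine_gaussianId h t
  rw [dotProduct_zero, dotProduct_zero] at h0t
  rw [dotProduct_comm v, dotProduct_comm (T *ᵥ u), dotProduct_mulVec, ← mulVec_transpose]
  linarith

theorem ae_dotProduct_eq_of_map_gaussianId_eq {Y : Type*} [MeasurableSpace Y]
    {f g : (Fin d → ℝ) → Y} {g' : Y → (Fin d → ℝ)} (hf : MeasurableEmbedding f)
    (hg : Measurable g) (hg' : Measurable g') (hg'g : Function.LeftInverse g' g) {u v : Fin d → ℝ}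
    (h0 : (gaussianId d 0).map f = (gaussianId d 0).map g)
    (h : (gaussianId d u).map f = (gaussianId d v).map g) :
    ∀ᵐ z ∂gaussianId d 0, z ⬝ᵥ u - u ⬝ᵥ u / 2 = g' (f z) ⬝ᵥ v - v ⬝ᵥ v / 2 := by
  obtain ⟨f', hf', hf'f⟩ := hf.exists_measurable_leftInverse
  have hρ (m : Fin d → ℝ) :
      Measurable fun z : Fin d → ℝ => ENNReal.ofReal (Real.exp (z ⬝ᵥ m - m ⬝ᵥ m / 2)) := by
    fun_prop
  rw [gaussianId_eq_withDensity d u, gaussianId_eq_withDensity d v,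
    Measure.map_withDensity_of_leftInverse _ hf.measurable hf' hf'f (hρ u),
    Measure.map_withDensity_of_leftInverse _ hg hg' hg'g (hρ v), ← h0,
    withDensity_eq_iff_of_sigmaFinite (by fun_prop) (by fun_prop)] at h
  filter_upwards [ae_of_ae_map hf.measurable.aemeasurable h] with z hz
  simp only [Function.comp_apply, hf'f z] at hz
  exact Real.exp_eq_exp.mp
    ((ENNReal.ofReal_eq_ofReal_iff (Real.exp_pos _).le (Real.exp_pos _).le).mp hz)

theorem exists_orthogonal_of_map_gaussianId_eq {Y ι : Type*} [MeasurableSpace Y] [Fintype ι]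
    {f g : (Fin d → ℝ) → Y} (hf : MeasurableEmbedding f) (hg : MeasurableEmbedding g)
    {U V : Matrix (Fin d) ι ℝ} (h0 : (gaussianId d 0).map f = (gaussianId d 0).map g)
    (h : ∀ j, (gaussianId d (U.col j)).map f = (gaussianId d (V.col j)).map g)
    (hrank : V.rank = d ∨ U.rank = d) :
    ∃ O : Matrix (Fin d) (Fin d) ℝ, O * Oᵀ = 1 ∧ V = O * U := by
  wlog hV : V.rank = d generalizing f g U V
  · obtain ⟨O, hO, hUO⟩ := this hg hf h0.symm (fun j => (h j).symm) hrank.symm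
      (hrank.resolve_left hV)
    have hOtO : Oᵀ * O = 1 := mul_eq_one_comm.mp hO
    exact ⟨Oᵀ, by rwa [transpose_transpose], by rw [hUO, ← Matrix.mul_assoc, hOtO, Matrix.one_mul]⟩
  obtain ⟨g', hg', hg'g⟩ := hg.exists_measurable_leftInverse
  obtain ⟨R, hR⟩ := V.exists_mul_eq_one_of_rank_eq (by rw [hV, Fintype.card_fin])
  set δ : ι → ℝ := fun j => (V.col j ⬝ᵥ V.col j - U.col j ⬝ᵥ U.col j) / 2
  -- Comparing densities gives `Vᵀ (g' (f z)) = Uᵀ z + δ` a.e., and `Rᵀ` is a left inverse of `Vᵀ`.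
  have haffine : g' ∘ f =ᵐ[gaussianId d 0] fun z => (Rᵀ * Uᵀ) *ᵥ z + Rᵀ *ᵥ δ := by
    filter_upwards [ae_all_iff.mpr fun j =>
      ae_dotProduct_eq_of_map_gaussianId_eq hf hg.measurable hg' hg'g h0 (h j)] with z hz
    have hcol : Vᵀ *ᵥ g' (f z) = Uᵀ *ᵥ z + δ := by
      ext j
      change V.col j ⬝ᵥ g' (f z) = U.col j ⬝ᵥ z + (V.col j ⬝ᵥ V.col j - U.col j ⬝ᵥ U.col j) / 2
      rw [dotProduct_comm (V.col j), dotProduct_comm (U.col j)]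
      linarith [hz j]
    rw [Function.comp_apply, ← mulVec_mulVec, ← mulVec_add, ← hcol, mulVec_mulVec,
      ← transpose_mul, hR, transpose_one, one_mulVec]
  have hmap {u v : Fin d → ℝ} (huv : (gaussianId d u).map f = (gaussianId d v).map g) :
      (gaussianId d u).map (fun z => (Rᵀ * Uᵀ) *ᵥ z + Rᵀ *ᵥ δ) = gaussianId d v := by
    have hac : gaussianId d u ≪ gaussianId d 0 := by
      rw [gaussianId_eq_withDensity d u]
      exact withDensity_absolutelyContinuous _ _
    rw [← Measure.map_congr (hac.ae_eq haffine)]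
    exact Measure.map_comp_eq_of_map_eq_map hf.measurable hg.measurable hg' hg'g huv
  refine ⟨Rᵀ * Uᵀ, mul_transpose_eq_one_of_map_affine_gaussianId (hmap h0), ext_col fun j => ?_⟩
  exact eq_mulVec_of_map_affine_gaussianId (hmap h0) (hmap (h j))

end GaussianMeans

theorem IsC2DiffeoOntoImage.measurableEmbedding {n m : ℕ} {f : (Fin n → ℝ) → (Fin m → ℝ)}
    (hf : IsC2DiffeoOntoImage f) : MeasurableEmbedding f :=
  hf.1.continuous.measurableEmbedding hf.2.1

theorem perturbation_matrix_identifiability_general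
    (dZ D K M : ℕ)
    (a : Fin (M + 1) → (Fin K → ℝ))
    (A : Matrix (Fin K) (Fin M) ℝ)
    (hA : A = Matrix.of fun k (e : Fin M) => a e.succ k - a 0 k)
    (f ftilde : (Fin dZ → ℝ) → (Fin D → ℝ))
    (W Wt : Matrix (Fin dZ) (Fin K) ℝ)
    (hf : IsC2DiffeoOntoImage f) (hft : IsC2DiffeoOntoImage ftilde)
    (heq : ∀ e : Fin (M + 1),
      (gaussianId dZ (-(W.mulVec (a 0)))).map (fun z => f (z + W.mulVec (a e))) =
        (gaussianId dZ (-(Wt.mulVec (a 0)))).map (fun z => ftilde (z + Wt.mulVec (a e))))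
    (hrank : (Wt * A).rank = dZ ∨ (W * A).rank = dZ)
    (hArank : A.rank = K) :
    ∃ O : Matrix (Fin dZ) (Fin dZ) ℝ,
      O * O.transpose = 1 ∧ Wt = O * W := by
  have hlaw (e : Fin (M + 1)) : (gaussianId dZ (W *ᵥ (a e - a 0))).map f
      = (gaussianId dZ (Wt *ᵥ (a e - a 0))).map ftilde := by
    have h := heq e
    rwa [map_gaussianId_comp_add_const hf.measurableEmbedding.measurable,
      map_gaussianId_comp_add_const hft.measurableEmbedding.measurable, neg_add_eq_sub,
      neg_add_eq_sub, ← mulVec_sub, ← mulVec_sub] at h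
  have hcol (V : Matrix (Fin dZ) (Fin K) ℝ) (j : Fin M) :
      (V * A).col j = V *ᵥ (a j.succ - a 0) := by
    rw [hA]
    rfl
  obtain ⟨O, hO, hOA⟩ := exists_orthogonal_of_map_gaussianId_eq hf.measurableEmbedding
    hft.measurableEmbedding (by simpa using hlaw 0)
    (fun j => by rw [hcol, hcol]; exact hlaw j.succ) hrank
  obtain ⟨R, hR⟩ := A.exists_mul_eq_one_of_rank_eq (by rw [hArank, Fintype.card_fin])
  refine ⟨O, hO, ?_⟩
  calc Wt = Wt * A * R := by rw [Matrix.mul_assoc, hR, Matrix.mul_one]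
    _ = O * W := by rw [hOA, Matrix.mul_assoc, Matrix.mul_assoc, hR, Matrix.mul_one]

/-- **Identifiability of the perturbation matrix.**
Under the assumptions of the identifiability theorem, if additionally `A` has full
row rank (`rank A = K ≤ M`), then the perturbation matrix is identifiable up to an
orthogonal transformation: `W̃ = O W` for some orthogonal `O`. -/
theorem perturbation_matrix_identifiability
    (dZ D K M : ℕ) (hdZ : 1 ≤ dZ) (hD : 1 ≤ D) (hK : 1 ≤ K)
    (a : Fin (M + 1) → (Fin K → ℝ))
    (A : Matrix (Fin K) (Fin M) ℝ)
    (hA : A = Matrix.of fun k (e : Fin M) => a e.succ k - a 0 k)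
    (f ftilde : (Fin dZ → ℝ) → (Fin D → ℝ))
    (W Wt : Matrix (Fin dZ) (Fin K) ℝ)
    (hf : IsC2DiffeoOntoImage f) (hft : IsC2DiffeoOntoImage ftilde)
    (heq : ∀ e : Fin (M + 1),
      (gaussianId dZ (-(W.mulVec (a 0)))).map (fun z => f (z + W.mulVec (a e))) =
        (gaussianId dZ (-(Wt.mulVec (a 0)))).map (fun z => ftilde (z + Wt.mulVec (a e))))
    (hrank : (Wt * A).rank = dZ ∨ (W * A).rank = dZ)
    (hArank : A.rank = K) (hKM : K ≤ M) :
    ∃ O : Matrix (Fin dZ) (Fin dZ) ℝ,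
      O * O.transpose = 1 ∧ Wt = O * W :=
  perturbation_matrix_identifiability_general dZ D K M a A hA f ftilde W Wt hf hft heq hrank hArank
end

section
/- Let f : ℝ^{d_Z} → ℝ^D be a C²-diffeomorphism onto its image, W ∈ ℝ^{d_Z×K}, O ∈ O(d_Z) an orthogonal matrix, and W̃ ∈ ℝ^{d_Z×K} a matrix satisfying W̃ (a_e − a_0) = O W (a_e − a_0) for all e ∈ {0, ..., M}. Define f̃ : ℝ^{d_Z} → ℝ^D by f̃(z) = f(Oᵀ z). Then for every e ∈ {0, ..., M}, f(Z + W a_e) is equal in distribution to f̃(Z̃ + W̃ a_e), where Z ~ N(−W a_0, I) and Z̃ ~ N(−W̃ a_0, I). -/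
/-! After absorbing the means, environment `e` of the first model is the law of `f (ξ + v)` and
that of the second is the law of `f (Oᵀ ξ + v)`, where `ξ` is a standard Gaussian and
`v = W (a_e - a_0)`; this uses `W̃ (a_e - a_0) = O v`. The standard Gaussian is invariant under
the orthogonal map `Oᵀ`, so the two laws agree. -/

open MeasureTheory ProbabilityTheory

theorem MeasurableEmbedding.map_map {α β γ : Type*} [MeasurableSpace α]
    [MeasurableSpace β] [MeasurableSpace γ] {f : α → β} (hf : MeasurableEmbedding f)
    (μ : Measure α) (g : β → γ) : (μ.map f).map g = μ.map (g ∘ f) := by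
  by_cases hg : AEMeasurable g (μ.map f)
  · exact hg.map_map_of_aemeasurable hf.measurable.aemeasurable
  · rw [Measure.map_of_not_aemeasurable hg,
      Measure.map_of_not_aemeasurable (hf.aemeasurable_map_iff.not.mp hg)]

open Matrix WithLp in
theorem ProbabilityTheory.map_comp_mulVec_pi_gaussianReal {ι X : Type*} [Fintype ι]
    [DecidableEq ι] [MeasurableSpace X] {Q : Matrix ι ι ℝ} (hQ : Q ∈ orthogonalGroup ι ℝ)
    (g : (ι → ℝ) → X) :
    (Measure.pi fun _ : ι => gaussianReal 0 1).map (g ∘ Q.mulVec) =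
      (Measure.pi fun _ : ι => gaussianReal 0 1).map g := by
  let U : EuclideanSpace ℝ ι ≃ₗᵢ[ℝ] EuclideanSpace ℝ ι :=
    Unitary.linearIsometryEquiv ⟨toEuclideanCLM (𝕜 := ℝ) Q, Unitary.map_mem _ hQ⟩
  have hofLp : Measure.pi (fun _ : ι => gaussianReal 0 1) =
      (stdGaussian (EuclideanSpace ℝ ι)).map ofLp := by
    rw [← map_pi_eq_stdGaussian]
    exact ((MeasurableEquiv.toLp 2 (ι → ℝ)).map_symm_map).symm
  have hU : Q.mulVec ∘ ofLp = ofLp ∘ U := by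
    ext x i
    show (Q *ᵥ x.ofLp) i = (toEuclideanCLM (𝕜 := ℝ) Q x).ofLp i
    simp
  have hofLp_emb : MeasurableEmbedding (ofLp : EuclideanSpace ℝ ι → ι → ℝ) :=
    (MeasurableEquiv.toLp 2 (ι → ℝ)).symm.measurableEmbedding
  have hU_emb : MeasurableEmbedding U := U.toHomeomorph.measurableEmbedding
  rw [hofLp, hofLp_emb.map_map, hofLp_emb.map_map, Function.comp_assoc, hU,
    ← Function.comp_assoc, ← hU_emb.map_map, stdGaussian_map U]

theorem gaussianId_map_comp_add {X : Type*} [MeasurableSpace X] (d : ℕ) (m c : Fin d → ℝ)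
    (g : (Fin d → ℝ) → X) :
    (gaussianId d m).map (fun z => g (z + c)) =
      (Measure.pi fun _ : Fin d => gaussianReal 0 1).map (fun z => g (z + (m + c))) := by
  rw [gaussianId, (measurableEmbedding_addLeft m).map_map]
  congr 1
  funext z
  rw [Function.comp_apply, add_assoc, add_left_comm]

theorem orthogonal_ambiguity_converse_general
    (dZ D K M : ℕ)
    (a : Fin (M + 1) → (Fin K → ℝ))
    (f : (Fin dZ → ℝ) → (Fin D → ℝ))
    (W Wt : Matrix (Fin dZ) (Fin K) ℝ)
    (O : Matrix (Fin dZ) (Fin dZ) ℝ) (hO : O * O.transpose = 1)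
    (hWt : ∀ e : Fin (M + 1),
      Wt.mulVec (a e - a 0) = O.mulVec (W.mulVec (a e - a 0)))
    (ftilde : (Fin dZ → ℝ) → (Fin D → ℝ))
    (hftilde : ∀ z, ftilde z = f (O.transpose.mulVec z)) :
    ∀ e : Fin (M + 1),
      (gaussianId dZ (-(W.mulVec (a 0)))).map (fun z => f (z + W.mulVec (a e))) =
        (gaussianId dZ (-(Wt.mulVec (a 0)))).map
          (fun z => ftilde (z + Wt.mulVec (a e))) := by
  intro e
  have hOt : O.transpose ∈ Matrix.orthogonalGroup (Fin dZ) ℝ := by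
    rw [Matrix.mem_orthogonalGroup_iff, Matrix.transpose_transpose, mul_eq_one_comm, hO]
  have hshift (V : Matrix (Fin dZ) (Fin K) ℝ) : -V.mulVec (a 0) + V.mulVec (a e) =
      V.mulVec (a e - a 0) := by
    rw [Matrix.mulVec_sub]; abel
  rw [gaussianId_map_comp_add, gaussianId_map_comp_add, hshift, hshift, hWt,
    ← map_comp_mulVec_pi_gaussianReal hOt]
  congr 1
  funext z
  rw [Function.comp_apply, hftilde, Matrix.mulVec_add, Matrix.mulVec_mulVec,
    mul_eq_one_comm.mp hO, Matrix.one_mulVec]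

/-- **Converse of identifiability: the orthogonal ambiguity is unavoidable.**
If `O` is orthogonal and `W̃` satisfies `W̃ (a_e - a₀) = O W (a_e - a₀)` for all
`e ∈ {0, …, M}`, then the model with decoder `f̃(z) = f(Oᵀ z)`, perturbation matrix
`W̃`, and base distribution `N(-W̃ a₀, I)` induces the same observed distribution as
`(f, W, N(-W a₀, I))` in every environment. -/
theorem orthogonal_ambiguity_converse
    (dZ D K M : ℕ) (hdZ : 1 ≤ dZ) (hD : 1 ≤ D) (hK : 1 ≤ K)
    (a : Fin (M + 1) → (Fin K → ℝ))
    (f : (Fin dZ → ℝ) → (Fin D → ℝ)) (hf : IsC2DiffeoOntoImage f)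
    (W Wt : Matrix (Fin dZ) (Fin K) ℝ)
    (O : Matrix (Fin dZ) (Fin dZ) ℝ) (hO : O * O.transpose = 1)
    (hWt : ∀ e : Fin (M + 1),
      Wt.mulVec (a e - a 0) = O.mulVec (W.mulVec (a e - a 0)))
    (ftilde : (Fin dZ → ℝ) → (Fin D → ℝ))
    (hftilde : ∀ z, ftilde z = f (O.transpose.mulVec z)) :
    ∀ e : Fin (M + 1),
      (gaussianId dZ (-(W.mulVec (a 0)))).map (fun z => f (z + W.mulVec (a e))) =
        (gaussianId dZ (-(Wt.mulVec (a 0)))).map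
          (fun z => ftilde (z + Wt.mulVec (a e))) :=
  orthogonal_ambiguity_converse_general dZ D K M a f W Wt O hO hWt ftilde hftilde
end

section
/- Let h : ℝ^d → ℝ^d be a C¹ map, W, W̃ ∈ ℝ^{d×K}, and a_0, ..., a_M ∈ ℝ^K, and let A ∈ ℝ^{K×M} be the matrix whose columns are a_1 − a_0, ..., a_M − a_0. Suppose that for all e ∈ {0, ..., M} and all z ∈ ℝ^d: (a_e − a_0)ᵀ Wᵀ (z + W a_0) − (1/2)(a_e − a_0)ᵀ Wᵀ W (a_e + a_0) = (a_e − a_0)ᵀ W̃ᵀ (h(z) + W̃ a_0) − (1/2)(a_e − a_0)ᵀ W̃ᵀ W̃ (a_e + a_0). Then for all z ∈ ℝ^d: Aᵀ Wᵀ = Aᵀ W̃ᵀ J_h(z), where J_h(z) is the Jacobian matrix of h at z. -/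
/-!
Fix a row `e` of `Aᵀ`, i.e. `v = a_{e+1} - a₀`. Subtracting the contrast identity at two points
shows that `z ↦ vᵀ Wᵀ z - vᵀ W̃ᵀ h(z)` is constant. Differentiating this constant map at `z`
gives `vᵀ Wᵀ = vᵀ W̃ᵀ J_h(z)`, which is row `e` of the claimed matrix identity.
-/

open Matrix

theorem ContinuousLinearMap.comp_fderiv_eq_of_sub_const {𝕜 E F G : Type*}
    [NontriviallyNormedField 𝕜] [NormedAddCommGroup E] [NormedSpace 𝕜 E]
    [NormedAddCommGroup F] [NormedSpace 𝕜 F] [NormedAddCommGroup G] [NormedSpace 𝕜 G]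
    {h : E → F} {z : E} (hh : DifferentiableAt 𝕜 h z) (L : E →L[𝕜] G) (ℓ : F →L[𝕜] G) (c : G)
    (hc : ∀ x, L x - ℓ (h x) = c) :
    ℓ.comp (fderiv 𝕜 h z) = L := by
  have hfun : (fun x => ℓ (h x)) = fun x => L x - c := by
    funext x
    rw [← hc x, sub_sub_cancel]
  have hcomp : HasFDerivAt (fun x => ℓ (h x)) (ℓ.comp (fderiv 𝕜 h z)) z :=
    ℓ.hasFDerivAt.comp z hh.hasFDerivAt
  rw [hfun] at hcomp
  exact hcomp.unique (L.hasFDerivAt.sub_const c)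

theorem Matrix.eq_mul_toMatrix'_fderiv_of_sub_const {𝕜 : Type*} [NontriviallyNormedField 𝕜]
    [CompleteSpace 𝕜] {m n p : Type*} [Fintype m] [Fintype n] [Fintype p] [DecidableEq n]
    [DecidableEq p] {h : (n → 𝕜) → (p → 𝕜)} {z : n → 𝕜} (hh : DifferentiableAt 𝕜 h z)
    (B : Matrix m n 𝕜) (C : Matrix m p 𝕜) (c : m → 𝕜) (hc : ∀ x, B *ᵥ x - C *ᵥ h x = c) :
    B = C * LinearMap.toMatrix' ((fderiv 𝕜 h z) : (n → 𝕜) →ₗ[𝕜] (p → 𝕜)) := by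
  have hcomp := ContinuousLinearMap.comp_fderiv_eq_of_sub_const hh
    (LinearMap.toContinuousLinearMap (toLin' B)) (LinearMap.toContinuousLinearMap (toLin' C)) c
    (by simpa using hc)
  have hlin := congrArg (fun T : (n → 𝕜) →L[𝕜] (m → 𝕜) => LinearMap.toMatrix' T.toLinearMap) hcomp
  simpa [LinearMap.toMatrix'_comp] using hlin.symm

theorem dotProduct_sub_dotProduct_eq_of_contrast {d K M : ℕ}
    {h : (Fin d → ℝ) → (Fin d → ℝ)} {W Wt : Matrix (Fin d) (Fin K) ℝ}
    {a : Fin (M + 1) → (Fin K → ℝ)}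
    (hcontrast : ∀ (e : Fin (M + 1)) (z : Fin d → ℝ),
      dotProduct (a e - a 0) (W.transpose.mulVec (z + W.mulVec (a 0))) -
          (1 / 2) * dotProduct (a e - a 0)
            ((W.transpose * W).mulVec (a e + a 0)) =
        dotProduct (a e - a 0) (Wt.transpose.mulVec (h z + Wt.mulVec (a 0))) -
          (1 / 2) * dotProduct (a e - a 0)
            ((Wt.transpose * Wt).mulVec (a e + a 0)))
    (e : Fin (M + 1)) (z z' : Fin d → ℝ) :
    (a e - a 0) ⬝ᵥ Wᵀ *ᵥ z - (a e - a 0) ⬝ᵥ Wtᵀ *ᵥ h z =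
      (a e - a 0) ⬝ᵥ Wᵀ *ᵥ z' - (a e - a 0) ⬝ᵥ Wtᵀ *ᵥ h z' := by
  have hz := hcontrast e z
  have hz' := hcontrast e z'
  simp only [mulVec_add, dotProduct_add] at hz hz'
  linarith

theorem gaussian_contrast_to_jacobian_general
    (d K M : ℕ)
    (h : (Fin d → ℝ) → (Fin d → ℝ)) (hh : ContDiff ℝ 1 h)
    (W Wt : Matrix (Fin d) (Fin K) ℝ)
    (a : Fin (M + 1) → (Fin K → ℝ))
    (A : Matrix (Fin K) (Fin M) ℝ)
    (hA : A = Matrix.of fun k (e : Fin M) => a e.succ k - a 0 k)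
    (hcontrast : ∀ (e : Fin (M + 1)) (z : Fin d → ℝ),
      dotProduct (a e - a 0) (W.transpose.mulVec (z + W.mulVec (a 0))) -
          (1 / 2) * dotProduct (a e - a 0)
            ((W.transpose * W).mulVec (a e + a 0)) =
        dotProduct (a e - a 0) (Wt.transpose.mulVec (h z + Wt.mulVec (a 0))) -
          (1 / 2) * dotProduct (a e - a 0)
            ((Wt.transpose * Wt).mulVec (a e + a 0))) :
    ∀ z : Fin d → ℝ,
      A.transpose * W.transpose =
        A.transpose * Wt.transpose *
          LinearMap.toMatrix' ((fderiv ℝ h z) : (Fin d → ℝ) →ₗ[ℝ] (Fin d → ℝ)) := by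
  intro z
  have hAt_mulVec : ∀ (x : Fin K → ℝ) (e : Fin M), (Aᵀ *ᵥ x) e = (a e.succ - a 0) ⬝ᵥ x := by
    intro x e
    rw [mulVec_transpose, dotProduct_comm, hA]
    rfl
  refine eq_mul_toMatrix'_fderiv_of_sub_const (hh.differentiable one_ne_zero z) _ _
    ((Aᵀ * Wᵀ) *ᵥ 0 - (Aᵀ * Wtᵀ) *ᵥ h 0) fun x => ?_
  funext e
  simp only [← mulVec_mulVec, Pi.sub_apply, hAt_mulVec]
  exact dotProduct_sub_dotProduct_eq_of_contrast hcontrast e.succ x 0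

/-- **From the Gaussian log-density contrast identity to the Jacobian identity.**
Let `h : ℝ^d → ℝ^d` be `C¹` and suppose that for all environments `e ∈ {0, …, M}` and
all `z ∈ ℝ^d` the Gaussian contrast identity
`(a_e - a₀)ᵀ Wᵀ (z + W a₀) - (1/2)(a_e - a₀)ᵀ Wᵀ W (a_e + a₀)
  = (a_e - a₀)ᵀ W̃ᵀ (h(z) + W̃ a₀) - (1/2)(a_e - a₀)ᵀ W̃ᵀ W̃ (a_e + a₀)`
holds. Then `Aᵀ Wᵀ = Aᵀ W̃ᵀ J_h(z)` for all `z`, where `A` is the matrix with columns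
`a_e - a₀` and `J_h(z)` is the Jacobian matrix of `h` at `z`. -/
theorem gaussian_contrast_to_jacobian
    (d K M : ℕ) (hd : 1 ≤ d) (hK : 1 ≤ K)
    (h : (Fin d → ℝ) → (Fin d → ℝ)) (hh : ContDiff ℝ 1 h)
    (W Wt : Matrix (Fin d) (Fin K) ℝ)
    (a : Fin (M + 1) → (Fin K → ℝ))
    (A : Matrix (Fin K) (Fin M) ℝ)
    (hA : A = Matrix.of fun k (e : Fin M) => a e.succ k - a 0 k)
    (hcontrast : ∀ (e : Fin (M + 1)) (z : Fin d → ℝ),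
      dotProduct (a e - a 0) (W.transpose.mulVec (z + W.mulVec (a 0))) -
          (1 / 2) * dotProduct (a e - a 0)
            ((W.transpose * W).mulVec (a e + a 0)) =
        dotProduct (a e - a 0) (Wt.transpose.mulVec (h z + Wt.mulVec (a 0))) -
          (1 / 2) * dotProduct (a e - a 0)
            ((Wt.transpose * Wt).mulVec (a e + a 0))) :
    ∀ z : Fin d → ℝ,
      A.transpose * W.transpose =
        A.transpose * Wt.transpose *
          LinearMap.toMatrix' ((fderiv ℝ h z) : (Fin d → ℝ) →ₗ[ℝ] (Fin d → ℝ)) :=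
  gaussian_contrast_to_jacobian_general d K M h hh W Wt a A hA hcontrast
end
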